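/- arXiv:2107.02727 — 2 statements merged into one kernel-verified Lean document; each statement's English description precedes it below -/
import Mathlib

section
/- Let (V, ≤) be a dense linear order without endpoints and let n be a natural number. For any two strictly increasing n-tuples s = (s₁ < s₂ < ... < sₙ) and t = (t₁ < t₂ < ... < tₙ) of elements of V, there exists a finite sequence of strictly increasing n-tuples beginning with s and ending with t such that consecutive tuples in the sequence differ in exactly one coordinate. -/
lemma aux_mono {V : Type*} [LinearOrder V] {N : ℕ} (u w : Fin N → V)
    (hu : StrictMono u) (hw : StrictMono w) (huw : ∀ i j : Fin N, u i < w j) (m : ℕ) :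
    StrictMono (fun i : Fin N => if (i : ℕ) < m then u i else w i) := by
  intro i j hij
  have hij' : (i : ℕ) < (j : ℕ) := hij
  by_cases hi : (i : ℕ) < m <;> by_cases hj : (j : ℕ) < m
  · simpa [hi, hj] using hu hij
  · simpa [hi, hj] using huw i j
  · omega
  · simpa [hi, hj] using hw hij

lemma aux_unique {α β : Type*} (f g : α → β) (i₀ : α)
    (h0 : f i₀ ≠ g i₀) (h : ∀ i, i ≠ i₀ → f i = g i) : ∃! i, f i ≠ g i :=
  ⟨i₀, h0, fun i hi => by by_contra hne; exact hi (h i hne)⟩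

lemma aux_path {V : Type*} [LinearOrder V] [DenselyOrdered V] [NoMinOrder V] [NoMaxOrder V]
    (N : ℕ) (hN : 0 < N) (s t : Fin N → V) (hs : StrictMono s) (ht : StrictMono t) :
    ∃ (m : ℕ) (c : Fin (m + 1) → Fin N → V),
      c 0 = s ∧ c (Fin.last m) = t ∧ (∀ k, StrictMono (c k)) ∧
      ∀ k : Fin m, ∃! i : Fin N, c k.castSucc i ≠ c k.succ i := by
  -- build a strictly decreasing sequence below min (s ⟨0,hN⟩) (t ⟨0,hN⟩)
  let g : V → V := fun x => Classical.choose (exists_lt x)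
  have hg : ∀ x, g x < x := fun x => Classical.choose_spec (exists_lt x)
  let f : ℕ → V := fun k => g^[k] (min (s ⟨0, hN⟩) (t ⟨0, hN⟩))
  have hf : StrictAnti f := strictAnti_nat_of_succ_lt (fun k => by
    have : f (k + 1) = g (f k) := Function.iterate_succ_apply' g k _
    rw [this]; exact hg _)
  let u : Fin N → V := fun i => f (N - (i : ℕ))
  have hu : StrictMono u := by
    intro i j hij
    have hij' : (i : ℕ) < (j : ℕ) := hij
    exact hf (by omega)
  have hub : ∀ i : Fin N, u i < min (s ⟨0, hN⟩) (t ⟨0, hN⟩) := by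
    intro i
    have hi : (i : ℕ) < N := i.isLt
    have : f (N - (i : ℕ)) < f 0 := hf (by omega)
    exact this
  have hus : ∀ i j : Fin N, u i < s j := fun i j =>
    lt_of_lt_of_le (lt_of_lt_of_le (hub i) (min_le_left _ _)) (hs.monotone (Fin.le_def.mpr (Nat.zero_le _)))
  have hut : ∀ i j : Fin N, u i < t j := fun i j =>
    lt_of_lt_of_le (lt_of_lt_of_le (hub i) (min_le_right _ _)) (ht.monotone (Fin.le_def.mpr (Nat.zero_le _)))
  -- the path
  let d : ℕ → Fin N → V := fun k i =>
    if k ≤ N then (if (i : ℕ) < k then u i else s i)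
    else (if (i : ℕ) + k < 2 * N then u i else t i)
  have hd1 : ∀ k, k ≤ N → ∀ i : Fin N, d k i = if (i : ℕ) < k then u i else s i := by
    intro k hk i; simp only [d, if_pos hk]
  have hd2 : ∀ k, N ≤ k → ∀ i : Fin N, d k i = if (i : ℕ) + k < 2 * N then u i else t i := by
    intro k hk i
    by_cases h : k ≤ N
    · have hkN : k = N := le_antisymm h hk
      subst hkN
      have h1 : (i : ℕ) < k := i.isLt
      have h2 : (i : ℕ) + k < 2 * k := by omega
      simp only [d, if_pos le_rfl, if_pos h1, if_pos h2]
    · simp only [d, if_neg h]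
  have hdm : ∀ k, StrictMono (d k) := by
    intro k
    by_cases h : k ≤ N
    · have he : d k = fun i : Fin N => if (i : ℕ) < k then u i else s i := funext (hd1 k h)
      rw [he]; exact aux_mono u s hu hs hus k
    · have he : d k = fun i : Fin N => if (i : ℕ) < 2 * N - k then u i else t i := by
        funext i
        have hiff : ((i : ℕ) + k < 2 * N) ↔ ((i : ℕ) < 2 * N - k) := by omega
        simp only [d, if_neg h, hiff]
      rw [he]; exact aux_mono u t hu ht hut (2 * N - k)
  refine ⟨2 * N, fun k => d (k : ℕ), ?_, ?_, fun k => hdm _, ?_⟩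
  · funext i
    show d ((0 : Fin (2 * N + 1)) : ℕ) i = s i
    rw [Fin.val_zero, hd1 0 (Nat.zero_le N) i, if_neg (by omega)]
  · funext i
    show d ((Fin.last (2 * N)) : ℕ) i = t i
    rw [Fin.val_last, hd2 (2 * N) (by omega) i, if_neg (by omega)]
  · intro k
    have hk2 : (k : ℕ) < 2 * N := k.isLt
    simp only [Fin.coe_castSucc, Fin.val_succ]
    rcases lt_or_ge (k : ℕ) N with hk | hk
    · -- phase 1: coordinate k changes from s to u
      refine aux_unique _ _ ⟨(k : ℕ), hk⟩ ?_ ?_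
      · rw [hd1 _ (le_of_lt hk), hd1 _ (by omega), if_neg (lt_irrefl _),
          if_pos (by show (k:ℕ) < (k:ℕ) + 1; omega : ((⟨(k:ℕ), hk⟩ : Fin N) : ℕ) < (k : ℕ) + 1)]
        exact (ne_of_lt (hus _ _)).symm
      · intro i hi
        have hival : (i : ℕ) ≠ (k : ℕ) := fun h => hi (Fin.ext h)
        rw [hd1 _ (le_of_lt hk), hd1 _ (by omega)]
        rcases lt_or_ge (i : ℕ) (k : ℕ) with h | h
        · rw [if_pos h, if_pos (by omega)]
        · rw [if_neg (by omega), if_neg (by omega)]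
    · -- phase 2: coordinate 2N - k - 1 changes from u to t
      have hj : 2 * N - (k : ℕ) - 1 < N := by omega
      refine aux_unique _ _ ⟨2 * N - (k : ℕ) - 1, hj⟩ ?_ ?_
      · rw [hd2 _ hk, hd2 _ (by omega),
          if_pos (by show 2 * N - (k:ℕ) - 1 + (k:ℕ) < 2 * N; omega : ((⟨2 * N - (k:ℕ) - 1, hj⟩ : Fin N) : ℕ) + (k : ℕ) < 2 * N),
          if_neg (by show ¬ 2 * N - (k:ℕ) - 1 + ((k:ℕ) + 1) < 2 * N; omega : ¬ ((⟨2 * N - (k:ℕ) - 1, hj⟩ : Fin N) : ℕ) + ((k : ℕ) + 1) < 2 * N)]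
        exact ne_of_lt (hut _ _)
      · intro i hi
        have hival : (i : ℕ) ≠ 2 * N - (k : ℕ) - 1 := fun h => hi (Fin.ext h)
        rw [hd2 _ hk, hd2 _ (by omega)]
        rcases lt_or_ge ((i : ℕ) + (k : ℕ) + 1) (2 * N) with h | h
        · rw [if_pos (by omega), if_pos (by omega)]
        · rw [if_neg (by omega), if_neg (by omega)]

/-- Any two strictly increasing `n`-tuples in a dense linear order without endpoints
are connected by a finite sequence of strictly increasing tuples in which consecutive
tuples differ in exactly one coordinate. -/
theorem stmt_0 {V : Type*} [LinearOrder V] [DenselyOrdered V] [NoMinOrder V] [NoMaxOrder V]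
    (n : ℕ) (s t : Fin n → V) (hs : StrictMono s) (ht : StrictMono t) :
    ∃ (m : ℕ) (c : Fin (m + 1) → Fin n → V),
      c 0 = s ∧ c (Fin.last m) = t ∧ (∀ k, StrictMono (c k)) ∧
      ∀ k : Fin m, ∃! i : Fin n, c k.castSucc i ≠ c k.succ i := by
  cases n with
  | zero =>
      refine ⟨0, fun _ => s, rfl, ?_, fun _ => hs, fun k => k.elim0⟩
      funext i; exact i.elim0
  | succ n' => exact aux_path (n' + 1) (Nat.succ_pos n') s t hs ht
end

section
/- Let V be a dense linear order without endpoints, let F ⊆ V be a finite set, and let τ₁ < τ ∈ V with τ₁ ∉ F and τ ∉ F. Let Γ = {x ∈ F : x < τ} and T = F \ Γ. Then there exists an order-automorphism σ of V fixing τ and every element of T pointwise, and mapping every element of Γ to an element strictly less than τ₁. -/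
/-- The piecewise-linear map on `ℚ` that fixes `[t, ∞)` and scales `(-∞, t)` towards
`-∞` by factor `k`, as an order automorphism (for `k > 0`). -/
noncomputable def stretchBelow (t k : ℚ) (hk : 0 < k) : ℚ ≃o ℚ := by
  refine StrictMono.orderIsoOfRightInverse
    (fun x => if t ≤ x then x else k * (x - t) + t) ?_
    (fun x => if t ≤ x then x else (x - t) / k + t) ?_
  · intro a b hab
    dsimp only
    by_cases ha : t ≤ a
    · rw [if_pos ha, if_pos (ha.trans hab.le)]; exact hab
    · push_neg at ha
      rw [if_neg (not_le.mpr ha)]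
      by_cases hb : t ≤ b
      · rw [if_pos hb]
        have : k * (a - t) < 0 := mul_neg_of_pos_of_neg hk (by linarith)
        linarith
      · rw [if_neg hb]
        push_neg at hb
        have := (mul_lt_mul_iff_right₀ hk).mpr (show a - t < b - t by linarith)
        linarith
  · intro x
    dsimp only
    by_cases hx : t ≤ x
    · rw [if_pos hx, if_pos hx]
    · push_neg at hx
      have h2 : (x - t) / k < 0 := div_neg_of_neg_of_pos (by linarith) hk
      rw [if_neg (not_le.mpr hx), if_neg (by push_neg; linarith)]
      field_simp
      ring

/-- Given a finite set `F` in a countable dense linear order without endpoints, points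
`τ₁ < τ` outside `F`, with `Γ` the part of `F` below `τ` and `T = F \ Γ`, there is an
order-automorphism fixing `τ` and `T` pointwise and moving all of `Γ` strictly below `τ₁`. -/
theorem stmt_1 {V : Type*} [LinearOrder V] [DenselyOrdered V] [NoMinOrder V] [NoMaxOrder V]
    [Countable V] (F : Finset V) (τ₁ τ : V) (h1 : τ₁ < τ) (hτ₁ : τ₁ ∉ F) (hτ : τ ∉ F) :
    ∃ σ : V ≃o V,
      σ τ = τ ∧
      (∀ x ∈ F \ F.filter (fun y => y < τ), σ x = x) ∧
      (∀ x ∈ F.filter (fun y => y < τ), σ x < τ₁) := by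
  have : Nonempty V := ⟨τ⟩
  obtain ⟨e⟩ : Nonempty (V ≃o ℚ) := Order.iso_of_countable_dense V ℚ
  set t : ℚ := e τ with ht
  set Γ : Finset V := F.filter (fun y => y < τ) with hΓ
  -- choose the scaling factor
  set M : ℚ := ((insert 1 (Γ.image (fun x => (t - e τ₁) / (t - e x)))).max'
      (Finset.insert_nonempty _ _)) with hM
  have hM1 : (1 : ℚ) ≤ M := Finset.le_max' _ _ (Finset.mem_insert_self _ _)
  set k : ℚ := M + 1 with hk
  have hk0 : (0 : ℚ) < k := by linarith
  set σℚ : ℚ ≃o ℚ := stretchBelow t k hk0 with hσℚ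
  refine ⟨(e.trans σℚ).trans e.symm, ?_, ?_, ?_⟩
  · simp only [OrderIso.trans_apply, hσℚ, stretchBelow,
      StrictMono.orderIsoOfRightInverse]
    show e.symm (if t ≤ t then t else _) = τ
    rw [if_pos le_rfl]
    exact e.symm_apply_apply τ
  · intro x hx
    rw [Finset.mem_sdiff] at hx
    have hnlt : ¬ x < τ := fun h => hx.2 (Finset.mem_filter.mpr ⟨hx.1, h⟩)
    have hxτ : τ < x := lt_of_le_of_ne (not_lt.mp hnlt) (by rintro rfl; exact hτ hx.1)
    have hex : t ≤ e x := (e.le_iff_le.mpr hxτ.le)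
    simp only [OrderIso.trans_apply, hσℚ, stretchBelow,
      StrictMono.orderIsoOfRightInverse]
    show e.symm (if t ≤ e x then e x else _) = x
    rw [if_pos hex]
    exact e.symm_apply_apply x
  · intro x hx
    have hxΓ : x ∈ Γ := hx
    have hxτ : x < τ := (Finset.mem_filter.mp hx).2
    have hex : e x < t := e.lt_iff_lt.mpr hxτ
    have hgx : (t - e τ₁) / (t - e x) ≤ M := by
      rw [hM]
      exact Finset.le_max' _ _
        (Finset.mem_insert_of_mem (Finset.mem_image_of_mem (fun x => (t - e τ₁) / (t - e x)) hxΓ))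
    have heτ₁ : e τ₁ < t := e.lt_iff_lt.mpr h1
    -- key inequality: k * (e x - t) + t < e τ₁
    have hkey : k * (e x - t) + t < e τ₁ := by
      have hpos : 0 < t - e x := by linarith
      have h2 : t - e τ₁ ≤ M * (t - e x) := by
        rw [div_le_iff₀ hpos] at hgx; linarith
      have h3 : M * (t - e x) < k * (t - e x) := by
        apply mul_lt_mul_of_pos_right _ hpos; linarith
      nlinarith
    simp only [OrderIso.trans_apply, hσℚ, stretchBelow,
      StrictMono.orderIsoOfRightInverse]
    show e.symm (if t ≤ e x then e x else k * (e x - t) + t) < τ₁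
    rw [if_neg (not_le.mpr hex)]
    calc e.symm (k * (e x - t) + t) < e.symm (e τ₁) := by
          exact e.symm.lt_iff_lt.mpr hkey
      _ = τ₁ := e.symm_apply_apply τ₁
end
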